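/- arXiv:1912.09162 — 2 statements merged into one kernel-verified Lean document; each statement's English description precedes it below -/
import Mathlib

section
/- The non-archimedean field C, equipped with the real-valued valuation |z|_♭ = τ^{std(log|z|/log|t|)}, is spherically complete: every decreasing sequence of closed balls of positive radius in C has non-empty intersection. -/
open Filter

noncomputable section

abbrev starC (𝒰 : Ultrafilter ℂ) : Type := Filter.Germ (𝒰 : Filter ℂ) ℂ
abbrev starR (𝒰 : Ultrafilter ℂ) : Type := Filter.Germ (𝒰 : Filter ℂ) ℝ

variable (𝒰 : Ultrafilter ℂ)

def tC : starC 𝒰 := ↑(fun s : ℂ => s)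
def absG (z : starC 𝒰) : starR 𝒰 := z.map (fun w => ‖w‖)
def tAbs : starR 𝒰 := absG 𝒰 (tC 𝒰)
def tBoundedC (a : starC 𝒰) : Prop := ∃ N : ℕ, 0 < N ∧ absG 𝒰 a ≤ (tAbs 𝒰)⁻¹ ^ N

/-- The germ `|t|^β ∈ *ℝ`, for a real exponent `β`. -/
def tpow (β : ℝ) : starR 𝒰 := ↑(fun s : ℂ => ‖s‖ ^ β)

/-- `|z|_♭ ≤ ρ`, where `|z|_♭ = τ^{std(log|z|/log|t|)}` is the non-archimedean absolute
value on `C` (an element of `C` being represented by a `t`-bounded germ `z ∈ *ℂ`):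
equivalently, `|z| ≤ |t|^β` for every real `β` with `ρ < τ^β`. -/
def flatLe (τ : ℝ) (z : starC 𝒰) (ρ : ℝ) : Prop :=
  ∀ β : ℝ, ρ < τ ^ β → absG 𝒰 z ≤ tpow 𝒰 β

open Topology

/-! The balls `B(b n, r n)` are cut out by the countably many internal conditions
`‖z - b n‖ ≤ |t|^q`, for rational `q` with `r n < τ^q`, and finitely many of them are satisfied
by the center of the smallest ball involved. As `𝒰` converges to `0` without being principal, it
is countably incomplete, so the ultrapower is `ℵ₁`-saturated and one germ `z` satisfies all the
conditions. It is `t`-bounded because it lies within some `|t|^β` of the `t`-bounded center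
`b 0`. -/

def CountablyIncomplete {α : Type*} (l : Filter α) : Prop :=
  ∃ E : ℕ → Set α, (∀ k, E k ∈ l) ∧ ∀ x, ∃ k, x ∉ E k

theorem countablyIncomplete_of_le_nhdsNE {X : Type*} [TopologicalSpace X] [T1Space X]
    [FirstCountableTopology X] {l : Filter X} {x : X} (hl : l ≤ 𝓝[≠] x) :
    CountablyIncomplete l := by
  obtain ⟨V, hV⟩ := (𝓝 x).exists_antitone_basis
  refine ⟨fun k => V k \ {x}, fun k => hl (sdiff_mem_nhdsWithin_compl (hV.mem k) _), fun y => ?_⟩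
  rcases eq_or_ne y x with rfl | hy
  · exact ⟨0, fun h => h.2 rfl⟩
  · obtain ⟨k, hk⟩ := hV.mem_iff.1 (compl_singleton_mem_nhds hy.symm)
    exact ⟨k, fun h => hk h.1 rfl⟩

theorem Ultrafilter.le_nhdsNE_of_ne_pure {X : Type*} [TopologicalSpace X] {U : Ultrafilter X}
    {x : X} (hx : ↑U ≤ 𝓝 x) (hU : U ≠ pure x) : ↑U ≤ 𝓝[≠] x :=
  le_inf hx <| le_principal_iff.2 <| Ultrafilter.compl_mem_iff_notMem.2 fun h =>
    hU <| by simpa using Ultrafilter.eq_pure_of_finite_mem (Set.finite_singleton x) h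

/-- Countable saturation, in the form of a diagonal choice. -/
theorem CountablyIncomplete.exists_forall_eventually_nat {α β : Type*} [Nonempty β] {l : Filter α}
    (hl : CountablyIncomplete l) {P : ℕ → α → β → Prop}
    (hP : ∀ k, ∀ᶠ s in l, ∃ w, ∀ j ≤ k, P j s w) :
    ∃ z : α → β, ∀ j, ∀ᶠ s in l, P j s (z s) := by
  classical
  obtain ⟨E, hE, hEx⟩ := hl
  set D : ℕ → Set α := fun k => {s | s ∈ E k ∧ ∃ w, ∀ j ≤ k, P j s w}
  have hD : ∀ k, D k ∈ l := fun k => inter_mem (hE k) (hP k)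
  have hexit : ∀ s, ∃ k, s ∉ D k := fun s => (hEx s).imp fun k hk hs => hk hs.1
  -- `z s` satisfies the conditions up to the first stage whose set `s` leaves
  refine ⟨fun s => Classical.epsilon fun w => ∀ j < Nat.find (hexit s), P j s w, fun j => ?_⟩
  filter_upwards [(eventually_all_finite (Set.finite_le_nat j)).2 fun i _ => hD i] with s hs
  have hj : j < Nat.find (hexit s) := (Nat.lt_find_iff _ _).2 fun i hi => not_not.2 (hs i hi)
  obtain ⟨-, w, hw⟩ := not_not.1 (Nat.find_min (hexit s) (Nat.sub_one_lt_of_lt hj))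
  exact Classical.epsilon_spec (p := fun w => ∀ j < Nat.find (hexit s), P j s w)
    ⟨w, fun i hi => hw i (by omega)⟩ j hj

theorem CountablyIncomplete.exists_forall_eventually {α ι β : Type*} [Countable ι] [Nonempty β]
    {l : Filter α} (hl : CountablyIncomplete l) {P : ι → α → β → Prop}
    (hP : ∀ F : Finset ι, ∀ᶠ s in l, ∃ w, ∀ j ∈ F, P j s w) :
    ∃ z : α → β, ∀ j, ∀ᶠ s in l, P j s (z s) := by
  classical
  cases isEmpty_or_nonempty ι with
  | inl _ => exact ⟨fun _ => Classical.arbitrary β, isEmptyElim⟩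
  | inr _ =>
    obtain ⟨ν, hν⟩ := exists_surjective_nat ι
    obtain ⟨z, hz⟩ := hl.exists_forall_eventually_nat (P := fun k => P (ν k))
      fun k => (hP ((Finset.range (k + 1)).image ν)).mono fun s ⟨w, hw⟩ =>
        ⟨w, fun j hj => hw _ (Finset.mem_image_of_mem ν (Finset.mem_range.2 (by omega)))⟩
    exact ⟨z, hν.forall.2 hz⟩

theorem eventually_norm_mem_Ioc {l : Filter ℂ} (hl : l ≤ 𝓝[≠] 0) {ε : ℝ} (hε : 0 < ε) :
    ∀ᶠ s in l, ‖s‖ ∈ Set.Ioc 0 ε :=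
  (tendsto_norm_nhdsNE_zero.mono_left hl).eventually_mem (Ioc_mem_nhdsGT hε)

section Valuation

variable {𝒰}

theorem flatLe_coe_iff (τ : ℝ) (u : ℂ → ℂ) (ρ : ℝ) :
    flatLe 𝒰 τ ↑u ρ ↔ ∀ β : ℝ, ρ < τ ^ β → ∀ᶠ s in (𝒰 : Filter ℂ), ‖u s‖ ≤ ‖s‖ ^ β :=
  forall₂_congr fun _ _ => Germ.coe_le

theorem flatLe_zero (τ ρ : ℝ) : flatLe 𝒰 τ 0 ρ :=
  (flatLe_coe_iff τ 0 ρ).2 fun β _ => .of_forall fun s => by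
    simpa using Real.rpow_nonneg (norm_nonneg s) β

theorem tpow_antitone (ht : ∀ᶠ s in (𝒰 : Filter ℂ), ‖s‖ ∈ Set.Ioc 0 1) :
    Antitone (tpow 𝒰) := fun _ _ hβγ =>
  Germ.coe_le.2 <| ht.mono fun _ hs => Real.rpow_le_rpow_of_exponent_ge hs.1 hs.2 hβγ

theorem flatLe_of_forall_rat (ht : ∀ᶠ s in (𝒰 : Filter ℂ), ‖s‖ ∈ Set.Ioc 0 1) {τ : ℝ}
    (hτ : 0 < τ) {z : starC 𝒰} {ρ : ℝ}
    (h : ∀ q : ℚ, ρ < τ ^ (q : ℝ) → absG 𝒰 z ≤ tpow 𝒰 q) : flatLe 𝒰 τ z ρ := by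
  intro β hβ
  have hnhds : {x : ℝ | ρ < τ ^ x} ∈ 𝓝 β :=
    (Real.continuousAt_const_rpow hτ.ne').preimage_mem_nhds (lt_mem_nhds hβ)
  obtain ⟨u, hβu, hu⟩ := exists_Ico_subset_of_mem_nhds hnhds ⟨β + 1, by linarith⟩
  obtain ⟨q, hβq, hqu⟩ := exists_rat_btwn hβu
  exact (h q (hu ⟨hβq.le, hqu⟩)).trans (tpow_antitone ht hβq.le)

theorem exists_le_tpow_of_flatLe {τ : ℝ} (hτ : τ ∈ Set.Ioo (0 : ℝ) 1) {z : starC 𝒰} {ρ : ℝ}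
    (h : flatLe 𝒰 τ z ρ) : ∃ β, absG 𝒰 z ≤ tpow 𝒰 β := by
  obtain ⟨n, hn⟩ := pow_unbounded_of_one_lt ρ (one_lt_inv₀ hτ.1 |>.2 hτ.2)
  refine ⟨-n, h _ ?_⟩
  rwa [Real.rpow_neg hτ.1.le, Real.rpow_natCast, ← inv_pow]

theorem tAbs_inv_pow (n : ℕ) : (tAbs 𝒰)⁻¹ ^ n = ↑(fun s : ℂ => ‖s‖⁻¹ ^ n) := rfl

theorem tpow_neg_natCast (n : ℕ) : tpow 𝒰 (-n) = (tAbs 𝒰)⁻¹ ^ n := by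
  rw [tAbs_inv_pow]
  exact congrArg _ (funext fun s => by
    rw [Real.rpow_neg (norm_nonneg s), Real.rpow_natCast, inv_pow])

theorem tBoundedC_of_le_tpow (ht : ∀ᶠ s in (𝒰 : Filter ℂ), ‖s‖ ∈ Set.Ioc 0 1) {z : starC 𝒰}
    {β : ℝ} (h : absG 𝒰 z ≤ tpow 𝒰 β) : tBoundedC 𝒰 z := by
  obtain ⟨N, hN⟩ := exists_nat_gt (-β)
  refine ⟨N + 1, N.succ_pos, h.trans ?_⟩
  rw [← tpow_neg_natCast]
  exact tpow_antitone ht (by push_cast; linarith)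

theorem tBoundedC_add (ht : ∀ᶠ s in (𝒰 : Filter ℂ), ‖s‖ ∈ Set.Ioc 0 2⁻¹) {a b : starC 𝒰}
    (ha : tBoundedC 𝒰 a) (hb : tBoundedC 𝒰 b) : tBoundedC 𝒰 (a + b) := by
  obtain ⟨N, -, hN⟩ := ha
  obtain ⟨M, -, hM⟩ := hb
  induction a using Germ.inductionOn with | _ u
  induction b using Germ.inductionOn with | _ v
  refine ⟨max N M + 1, by omega, ?_⟩
  rw [tAbs_inv_pow] at hN hM ⊢
  filter_upwards [Germ.coe_le.1 hN, Germ.coe_le.1 hM, ht] with s hNs hMs hs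
  set x := ‖s‖⁻¹
  have hx : 2 ≤ x := (le_inv_comm₀ two_pos hs.1).2 hs.2
  have hx1 : 1 ≤ x := one_le_two.trans hx
  calc ‖u s + v s‖ ≤ x ^ N + x ^ M := (norm_add_le _ _).trans (add_le_add hNs hMs)
    _ ≤ x ^ max N M + x ^ max N M :=
      add_le_add (pow_le_pow_right₀ hx1 (le_max_left N M))
        (pow_le_pow_right₀ hx1 (le_max_right N M))
    _ = 2 * x ^ max N M := (two_mul _).symm
    _ ≤ x ^ (max N M + 1) := by rw [pow_succ']; gcongr

theorem exists_forall_flatLe_sub (hU : (𝒰 : Filter ℂ) ≤ 𝓝[≠] 0) {τ : ℝ} (hτ : 0 < τ)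
    (b : ℕ → starC 𝒰) (r : ℕ → ℝ) (hle : ∀ n m, n ≤ m → flatLe 𝒰 τ (b m - b n) (r n)) :
    ∃ z : starC 𝒰, ∀ n, flatLe 𝒰 τ (z - b n) (r n) := by
  have hrep : ∀ n, ∃ u : ℂ → ℂ, (u : starC 𝒰) = b n := fun n => Quot.exists_rep (b n)
  choose f hf using hrep
  have hle' : ∀ n m, n ≤ m → flatLe 𝒰 τ ↑(f m - f n) (r n) := fun n m hnm => by
    simpa only [Germ.coe_sub, ← hf] using hle n m hnm
  let P : ℕ × ℚ → ℂ → ℂ → Prop := fun c s w =>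
    r c.1 < τ ^ (c.2 : ℝ) → ‖w - f c.1 s‖ ≤ ‖s‖ ^ (c.2 : ℝ)
  -- the center of the smallest ball involved satisfies finitely many conditions
  have hfin : ∀ F : Finset (ℕ × ℚ), ∀ᶠ s in (𝒰 : Filter ℂ), ∃ w, ∀ c ∈ F, P c s w := fun F =>
    ((eventually_all_finset F).2 fun c hc => eventually_imp_distrib_left.2 fun hq =>
      (flatLe_coe_iff _ _ _).1 (hle' _ _ (Finset.le_sup hc)) _ hq).mono
      fun s hs => ⟨f (F.sup Prod.fst) s, hs⟩
  obtain ⟨z, hz⟩ := (countablyIncomplete_of_le_nhdsNE hU).exists_forall_eventually hfin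
  refine ⟨↑z, fun n => flatLe_of_forall_rat (eventually_norm_mem_Ioc hU one_pos) hτ
    fun q hq => ?_⟩
  rw [← hf n]
  exact Germ.coe_le.2 ((hz (n, q)).mono fun _ hs => hs hq)

end Valuation

theorem stmt5 (hnp : ∀ z : ℂ, 𝒰 ≠ pure z) (h0 : (𝒰 : Filter ℂ) ≤ nhds 0)
    (τ : ℝ) (hτ : τ ∈ Set.Ioo (0 : ℝ) 1)
    (b : ℕ → starC 𝒰) (hb : ∀ n, tBoundedC 𝒰 (b n))
    (r : ℕ → ℝ)
    (hnest : ∀ n, ∀ z : starC 𝒰,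
      flatLe 𝒰 τ (z - b (n + 1)) (r (n + 1)) → flatLe 𝒰 τ (z - b n) (r n)) :
    ∃ z : starC 𝒰, tBoundedC 𝒰 z ∧ ∀ n, flatLe 𝒰 τ (z - b n) (r n) := by
  have hU : (𝒰 : Filter ℂ) ≤ 𝓝[≠] 0 := Ultrafilter.le_nhdsNE_of_ne_pure h0 (hnp 0)
  have hballs : Antitone fun n => {z | flatLe 𝒰 τ (z - b n) (r n)} :=
    antitone_nat_of_succ_le hnest
  obtain ⟨z, hz⟩ := exists_forall_flatLe_sub hU hτ.1 b r fun n m hnm =>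
    hballs hnm (show flatLe 𝒰 τ (b m - b m) (r m) by simpa using flatLe_zero τ (r m))
  obtain ⟨β, hβ⟩ := exists_le_tpow_of_flatLe hτ (hz 0)
  refine ⟨z, ?_, hz⟩
  simpa using tBoundedC_add (eventually_norm_mem_Ioc hU (by norm_num))
    (tBoundedC_of_le_tpow (eventually_norm_mem_Ioc hU one_pos) hβ) (hb 0)
end
end

section
/- In C with the valuation |·|_♭, one has |log|t| − λ|_♭ = 1 for every complex number λ; consequently the image of log|t| in the residue field C̃ = C°/C°° is transcendental over ℂ. -/
open Filter

open Topology Polynomial in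
theorem absPowExp (ε : ℝ) (hε : 0 < ε) (n : ℕ) :
    Tendsto (fun x : ℝ => |x| ^ n * Real.exp (x * ε)) atBot (𝓝 0) := by
  have h2 : Tendsto (fun x : ℝ => -(x * ε)) atBot atTop := by
    apply tendsto_neg_atBot_atTop.comp
    exact Tendsto.atBot_mul_const hε tendsto_id
  have h1 : Tendsto (fun y : ℝ => ε⁻¹ ^ n * (y ^ n * Real.exp (-y))) atTop (𝓝 0) := by
    simpa using (Real.tendsto_pow_mul_exp_neg_atTop_nhds_zero n).const_mul (ε⁻¹ ^ n)
  apply (h1.comp h2).congr'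
  filter_upwards [eventually_le_atBot (0:ℝ)] with x hx
  have h3 : ε⁻¹ * (-(x * ε)) = |x| := by rw [abs_of_nonpos hx]; field_simp
  simp only [Function.comp, neg_neg, ← mul_assoc, ← mul_pow, h3]

open Topology Polynomial in
theorem polyExp (ε : ℝ) (hε : 0 < ε) (p : Polynomial ℂ) :
    Tendsto (fun x : ℝ => ‖p.eval (x : ℂ)‖ * Real.exp (x * ε)) atBot (𝓝 0) := by
  induction p using Polynomial.induction_on' with
  | add p q hp hq =>
    apply squeeze_zero' (g := fun x : ℝ => ‖p.eval (x:ℂ)‖ * Real.exp (x * ε)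
        + ‖q.eval (x:ℂ)‖ * Real.exp (x * ε))
    · filter_upwards with x; positivity
    · filter_upwards with x
      rw [Polynomial.eval_add, ← add_mul]
      exact mul_le_mul_of_nonneg_right (norm_add_le _ _) (Real.exp_pos _).le
    · simpa using hp.add hq
  | monomial n a =>
    have := (absPowExp ε hε n).const_mul (‖a‖)
    simp only [mul_zero] at this
    apply this.congr
    intro x
    simp [Polynomial.eval_monomial, map_mul, map_pow, Complex.norm_real, mul_assoc]

open Topology Polynomial in
theorem keyBound (ε : ℝ) (hε : 0 < ε) (p : Polynomial ℂ) (hp : p ≠ 0) :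
    ∀ᶠ x : ℝ in atBot, Real.exp (x * ε) ≤ ‖p.eval (x : ℂ)‖ ∧
      ‖p.eval (x : ℂ)‖ ≤ Real.exp (x * -ε) := by
  have hupper : ∀ᶠ x : ℝ in atBot, ‖p.eval (x : ℂ)‖ ≤ Real.exp (x * -ε) := by
    have h1 : ∀ᶠ x : ℝ in atBot,
        ‖p.eval (x : ℂ)‖ * Real.exp (x * ε) < 1 :=
      (polyExp ε hε p).eventually_lt_const one_pos
    filter_upwards [h1] with x hx
    have e1 := Real.exp_pos (x * ε)
    have e2 : Real.exp (x * -ε) * Real.exp (x * ε) = 1 := by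
      rw [← Real.exp_add]; ring_nf; exact Real.exp_zero
    nlinarith [norm_nonneg (p.eval (x : ℂ))]
  have hlower : ∀ᶠ x : ℝ in atBot, Real.exp (x * ε) ≤ ‖p.eval (x : ℂ)‖ := by
    by_cases hdeg : 0 < p.degree
    · have hz : Tendsto (fun x : ℝ => ‖(x : ℂ)‖) atBot atTop := by
        simpa [Complex.norm_real] using tendsto_abs_atBot_atTop
      have h2 : ∀ᶠ x : ℝ in atBot, (1:ℝ) ≤ ‖p.eval ((x:ℝ) : ℂ)‖ :=
        (Polynomial.tendsto_norm_atTop p hdeg hz).eventually_ge_atTop 1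
      filter_upwards [h2, eventually_le_atBot (0:ℝ)] with x hx1 hx0
      have : Real.exp (x * ε) ≤ 1 := Real.exp_le_one_iff.2 (by nlinarith)
      calc Real.exp (x * ε) ≤ 1 := this
        _ ≤ ‖p.eval (x : ℂ)‖ := by exact hx1
    · have hc : p = Polynomial.C (p.coeff 0) := Polynomial.eq_C_of_degree_le_zero (not_lt.1 hdeg)
      have hc0 : p.coeff 0 ≠ 0 := fun h => hp (by rw [hc, h, map_zero])
      have habs : 0 < ‖p.coeff 0‖ := norm_pos_iff.2 hc0
      have h3 : Tendsto (fun x : ℝ => Real.exp (x * ε)) atBot (𝓝 0) :=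
        Real.tendsto_exp_atBot.comp (Tendsto.atBot_mul_const hε tendsto_id)
      filter_upwards [h3.eventually_lt_const habs] with x hx
      rw [hc]; simpa using hx.le
  filter_upwards [hupper, hlower] with x h1 h2 using ⟨h2, h1⟩

noncomputable section

variable (𝒰 : Ultrafilter ℂ)

/-- The element `log|t|` of `C`, as the germ of the sequence `(log|t|)_t` (viewed in `ℂ`). -/
def logT : starC 𝒰 := ↑(fun s : ℂ => (Real.log ‖s‖ : ℂ))

/-- The constant embedding `ℂ →+* *ℂ`. -/
def constC : ℂ →+* starC 𝒰 :=
  (Filter.Germ.coeRingHom (𝒰 : Filter ℂ)).comp (Pi.constRingHom ℂ ℂ)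

open Topology in
theorem evalG (p : Polynomial ℂ) :
    p.eval₂ (constC 𝒰) (logT 𝒰) =
      ↑(fun s : ℂ => p.eval ((Real.log (‖s‖) : ℂ))) := by
  have h1 : p.eval₂ (constC 𝒰) (logT 𝒰) =
      Filter.Germ.coeRingHom (𝒰 : Filter ℂ)
        (p.eval₂ (Pi.constRingHom ℂ ℂ) (fun s : ℂ => (Real.log (‖s‖) : ℂ))) := by
    rw [Polynomial.hom_eval₂]; rfl
  have h4 : (p.eval₂ (Pi.constRingHom ℂ ℂ) (fun s : ℂ => (Real.log (‖s‖) : ℂ)))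
      = fun s : ℂ => p.eval ((Real.log (‖s‖) : ℂ)) := by
    funext s
    have h2 := Polynomial.hom_eval₂ p (Pi.constRingHom ℂ ℂ) (Pi.evalRingHom (fun _ : ℂ => ℂ) s)
      (fun s : ℂ => (Real.log (‖s‖) : ℂ))
    have h3 : (Pi.evalRingHom (fun _ : ℂ => ℂ) s).comp (Pi.constRingHom ℂ ℂ) = RingHom.id ℂ := by
      ext; rfl
    calc (p.eval₂ (Pi.constRingHom ℂ ℂ) fun s : ℂ => (Real.log (‖s‖) : ℂ)) s
        = Pi.evalRingHom (fun _ : ℂ => ℂ) s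
            (p.eval₂ (Pi.constRingHom ℂ ℂ) fun s : ℂ => (Real.log (‖s‖) : ℂ)) := rfl
      _ = p.eval ((Real.log (‖s‖) : ℂ)) := by
          rw [h2, h3]; rfl
  rw [h1, h4]
  rfl

open Topology in
theorem mainPoly (hnp : ∀ z : ℂ, 𝒰 ≠ pure z) (h0 : (𝒰 : Filter ℂ) ≤ nhds 0)
    (p : Polynomial ℂ) (hp : p ≠ 0) (ε : ℝ) (hε : 0 < ε) :
    tpow 𝒰 ε ≤ absG 𝒰 (p.eval₂ (constC 𝒰) (logT 𝒰)) ∧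
      absG 𝒰 (p.eval₂ (constC 𝒰) (logT 𝒰)) ≤ tpow 𝒰 (-ε) := by
  have hne : ∀ᶠ s : ℂ in 𝒰, s ≠ 0 := by
    rw [Filter.Eventually]
    have : {(0:ℂ)} ∉ 𝒰 := by
      intro h
      rcases Ultrafilter.eq_pure_of_finite_mem (Set.finite_singleton 0) h with ⟨x, hx, hfx⟩
      exact hnp x hfx
    exact (Ultrafilter.compl_mem_iff_notMem.2 this)
  have hpos : ∀ᶠ s : ℂ in 𝒰, 0 < ‖s‖ := by
    filter_upwards [hne] with s hs using norm_pos_iff.2 hs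
  have habs : Tendsto (fun s : ℂ => ‖s‖) 𝒰 (𝓝[>] 0) := by
    apply tendsto_nhdsWithin_iff.2 ⟨?_, hpos⟩
    have : Tendsto (fun s : ℂ => ‖s‖) (nhds 0) (𝓝 0) := by
      simpa using (continuous_norm.tendsto (0:ℂ))
    exact this.comp (tendsto_id.mono_left h0)
  have hlog : Tendsto (fun s : ℂ => Real.log (‖s‖)) 𝒰 atBot :=
    Real.tendsto_log_nhdsGT_zero.comp habs
  have hkey := hlog.eventually (keyBound ε hε p hp)
  rw [evalG]
  unfold tpow absG
  rw [Filter.Germ.map_coe]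
  constructor <;> rw [Filter.Germ.coe_le] <;>
    filter_upwards [hkey, hpos] with s hs hs0 <;>
    rw [Real.rpow_def_of_pos hs0]
  · exact hs.1
  · exact hs.2

/-- In `C` with the valuation `|·|_♭`, one has `|log|t| − λ|_♭ = 1` for every complex
number `λ` (i.e. `|t|^ε ≤ |log|t| − λ| ≤ |t|^{-ε}` for every standard `ε > 0`);
consequently the image of `log|t|` in the residue field `C̃ = C°/C°°` is transcendental
over `ℂ`: for every nonzero polynomial `p` over `ℂ`, the residue of `p(log|t|)` is
nonzero, i.e. `|p(log|t|)|_♭ = 1`. -/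
theorem stmt7 (hnp : ∀ z : ℂ, 𝒰 ≠ pure z) (h0 : (𝒰 : Filter ℂ) ≤ nhds 0) :
    (∀ lam : ℂ, ∀ ε : ℝ, 0 < ε →
      tpow 𝒰 ε ≤ absG 𝒰 (logT 𝒰 - constC 𝒰 lam) ∧
      absG 𝒰 (logT 𝒰 - constC 𝒰 lam) ≤ tpow 𝒰 (-ε)) ∧
    (∀ p : Polynomial ℂ, p ≠ 0 → ∀ ε : ℝ, 0 < ε →
      tpow 𝒰 ε ≤ absG 𝒰 (p.eval₂ (constC 𝒰) (logT 𝒰)) ∧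
      absG 𝒰 (p.eval₂ (constC 𝒰) (logT 𝒰)) ≤ tpow 𝒰 (-ε)) := by
  refine ⟨fun lam ε hε => ?_, fun p hp ε hε => mainPoly 𝒰 hnp h0 p hp ε hε⟩
  have := mainPoly 𝒰 hnp h0 (Polynomial.X - Polynomial.C lam)
    (Polynomial.X_sub_C_ne_zero lam) ε hε
  simpa [Polynomial.eval₂_sub, Polynomial.eval₂_X, Polynomial.eval₂_C] using this


end
end
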